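/- If p ∈ [0,1] and φ is any analytic self-map of D, then for every f with ‖f‖_{CA_p,*} < ∞, ‖f∘φ‖_{CA_p,*} ≤ ((1+|φ(0)|)/(1-|φ(0)|))^{(1-p)/2} ‖f‖_{CA_p,*}. Hence every composition operator is bounded on CA_p for 0 ≤ p ≤ 1. -/

import Mathlib

/-!
Fix `a` and put `b = φ a`. The map `ψ = σ_b ∘ φ ∘ σ_a` fixes `0`, so by Littlewood's subordination
principle composing with `ψ` does not increase the boundary `L²` norm; since `σ_b` is an involution,
this gives `‖f ∘ φ ∘ σ_a - f(φ a)‖₂ ≤ ‖f ∘ σ_b - f b‖₂`. The Schwarz lemma applied to `σ_{φ 0} ∘ φ`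
gives `1 - |a|² ≤ (1 + |φ 0|)/(1 - |φ 0|) · (1 - |b|²)`, and the two estimates combine to the
claimed bound.

For Littlewood's principle on a circle of radius `r < 1`, write a polynomial as
`P(w) = c + w Q(w)`: the mean value property makes `c` orthogonal to `ψ · Q ∘ ψ`, and `|ψ| ≤ r` on
the circle by the Schwarz lemma, so induction on the degree gives `∫|P ∘ ψ|² ≤ ∫|P|²`. Taylor
polynomials converge uniformly on a larger disc, and circle averages are continuous in the radius,
which gives the inequality for `F` and then for `r = 1`.
-/

open Metric Set ComplexConjugate Real Finset Filter Topology MeasureTheory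

/-- The Möbius involution `σ_a(z) = (a - z)/(1 - conj(a) z)` of the unit disk. -/
noncomputable def mSigma (a z : ℂ) : ℂ := (a - z) / (1 - (starRingEnd ℂ) a * z)

/-- The squared boundary `L²` norm `∫_T ‖f(ξ)‖² |dξ|` over the unit circle. -/
noncomputable def bnormSq (f : ℂ → ℂ) : ℝ :=
  ∫ θ in (0:ℝ)..(2 * Real.pi), ‖f (Complex.exp (θ * Complex.I))‖ ^ 2

lemma norm_one_sub_conj_mul_sq_sub_norm_sub_sq (a w : ℂ) :
    ‖1 - conj a * w‖ ^ 2 - ‖a - w‖ ^ 2 = (1 - ‖a‖ ^ 2) * (1 - ‖w‖ ^ 2) := by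
  simp only [Complex.sq_norm, Complex.normSq_apply, Complex.sub_re, Complex.sub_im,
    Complex.mul_re, Complex.mul_im, Complex.one_re, Complex.one_im, Complex.conj_re,
    Complex.conj_im]
  ring

lemma one_sub_conj_mul_ne_zero {a w : ℂ} (ha : ‖a‖ < 1) (hw : ‖w‖ ≤ 1) :
    1 - conj a * w ≠ 0 := by
  refine sub_ne_zero.mpr fun h => ?_
  have : ‖conj a * w‖ < 1 := by
    rw [norm_mul, Complex.norm_conj]
    nlinarith [norm_nonneg a, norm_nonneg w]
  simp [← h] at this

lemma one_sub_norm_mSigma_sq_mul {a w : ℂ} (ha : ‖a‖ < 1) (hw : ‖w‖ ≤ 1) :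
    (1 - ‖mSigma a w‖ ^ 2) * ‖1 - conj a * w‖ ^ 2 = (1 - ‖a‖ ^ 2) * (1 - ‖w‖ ^ 2) := by
  have hD : ‖1 - conj a * w‖ ^ 2 ≠ 0 := by simp [one_sub_conj_mul_ne_zero ha hw]
  rw [← norm_one_sub_conj_mul_sq_sub_norm_sub_sq, mSigma, norm_div, div_pow, sub_mul,
    div_mul_cancel₀ _ hD, one_mul]

lemma norm_mSigma_le_one {a w : ℂ} (ha : ‖a‖ < 1) (hw : ‖w‖ ≤ 1) : ‖mSigma a w‖ ≤ 1 := by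
  have hD : 0 < ‖1 - conj a * w‖ ^ 2 := by simp [one_sub_conj_mul_ne_zero ha hw]
  have hnonneg : 0 ≤ 1 - ‖mSigma a w‖ ^ 2 := by
    refine nonneg_of_mul_nonneg_left ?_ hD
    rw [one_sub_norm_mSigma_sq_mul ha hw]
    exact mul_nonneg (by nlinarith [norm_nonneg a]) (by nlinarith [norm_nonneg w])
  nlinarith [norm_nonneg (mSigma a w)]

lemma norm_mSigma_lt_one {a w : ℂ} (ha : ‖a‖ < 1) (hw : ‖w‖ < 1) : ‖mSigma a w‖ < 1 := by
  have hD : 0 < ‖1 - conj a * w‖ ^ 2 := by simp [one_sub_conj_mul_ne_zero ha hw.le]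
  have hpos : 0 < 1 - ‖mSigma a w‖ ^ 2 := by
    refine pos_of_mul_pos_left ?_ hD.le
    rw [one_sub_norm_mSigma_sq_mul ha hw.le]
    exact mul_pos (by nlinarith [norm_nonneg a]) (by nlinarith [norm_nonneg w])
  nlinarith [norm_nonneg (mSigma a w)]

lemma mapsTo_mSigma_closedBall {a : ℂ} (ha : ‖a‖ < 1) :
    MapsTo (mSigma a) (closedBall 0 1) (closedBall 0 1) := fun _ hw =>
  mem_closedBall_zero_iff.mpr (norm_mSigma_le_one ha (mem_closedBall_zero_iff.mp hw))

lemma mapsTo_mSigma_ball {a : ℂ} (ha : ‖a‖ < 1) : MapsTo (mSigma a) (ball 0 1) (ball 0 1) :=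
  fun _ hw => mem_ball_zero_iff.mpr (norm_mSigma_lt_one ha (mem_ball_zero_iff.mp hw))

@[simp] lemma mSigma_self (a : ℂ) : mSigma a a = 0 := by simp [mSigma]

@[simp] lemma mSigma_zero (a : ℂ) : mSigma a 0 = a := by simp [mSigma]

lemma mSigma_mSigma {a w : ℂ} (ha : ‖a‖ < 1) (hw : ‖w‖ ≤ 1) : mSigma a (mSigma a w) = w := by
  have hD := one_sub_conj_mul_ne_zero ha hw
  have ha' := one_sub_conj_mul_ne_zero ha ha.le
  have hD' : 1 - w * conj a ≠ 0 := by rwa [mul_comm]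
  have hden : 1 - conj a * mSigma a w = (1 - conj a * a) / (1 - conj a * w) := by
    unfold mSigma
    field_simp
    ring
  rw [mSigma, hden, div_eq_iff (div_ne_zero ha' hD), mSigma]
  field_simp
  ring

lemma differentiableOn_mSigma {a : ℂ} (ha : ‖a‖ < 1) :
    DifferentiableOn ℂ (mSigma a) (closedBall 0 1) :=
  ((differentiableOn_const a).sub differentiableOn_id).div
    ((differentiableOn_const 1).sub ((differentiableOn_const _).mul differentiableOn_id))
    fun _ hw => one_sub_conj_mul_ne_zero ha (mem_closedBall_zero_iff.mp hw)

lemma one_sub_norm_sq_le_of_mSigma {c u : ℂ} (hc : ‖c‖ < 1) (hu : ‖u‖ ≤ 1) :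
    1 - ‖u‖ ^ 2 ≤ (1 + ‖c‖) / (1 - ‖c‖) * (1 - ‖mSigma c u‖ ^ 2) := by
  have hkey := one_sub_norm_mSigma_sq_mul hc hu
  have hD : 0 < ‖1 - conj c * u‖ := by simp [one_sub_conj_mul_ne_zero hc hu]
  have hDle : ‖1 - conj c * u‖ ≤ 1 + ‖c‖ := by
    calc ‖1 - conj c * u‖ ≤ ‖(1 : ℂ)‖ + ‖conj c * u‖ := norm_sub_le _ _
      _ ≤ 1 + ‖c‖ := by
        rw [norm_one, norm_mul, Complex.norm_conj]
        nlinarith [norm_nonneg c, norm_nonneg u]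
  rw [div_mul_eq_mul_div, le_div_iff₀ (by linarith)]
  refine le_of_mul_le_mul_right ?_ (pow_pos hD 2)
  calc (1 - ‖u‖ ^ 2) * (1 - ‖c‖) * ‖1 - conj c * u‖ ^ 2
      ≤ (1 - ‖u‖ ^ 2) * (1 - ‖c‖) * (1 + ‖c‖) ^ 2 := by
        gcongr
        exact mul_nonneg (by nlinarith [norm_nonneg u]) (by linarith)
    _ = (1 + ‖c‖) * (1 - ‖mSigma c u‖ ^ 2) * ‖1 - conj c * u‖ ^ 2 := by
        linear_combination (-(1 + ‖c‖)) * hkey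

lemma one_sub_norm_sq_le_of_mapsTo_ball {φ : ℂ → ℂ} (hφd : DifferentiableOn ℂ φ (ball 0 1))
    (hφm : MapsTo φ (ball 0 1) (ball 0 1)) {a : ℂ} (ha : a ∈ ball (0 : ℂ) 1) :
    1 - ‖a‖ ^ 2 ≤ (1 + ‖φ 0‖) / (1 - ‖φ 0‖) * (1 - ‖φ a‖ ^ 2) := by
  have hc : ‖φ 0‖ < 1 := mem_ball_zero_iff.mp (hφm (mem_ball_self one_pos))
  have hφa : ‖φ a‖ ≤ 1 := (mem_ball_zero_iff.mp (hφm ha)).le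
  have hschwarz : ‖mSigma (φ 0) (φ a)‖ ≤ ‖a‖ :=
    Complex.norm_le_norm_of_mapsTo_ball
      (((differentiableOn_mSigma hc).mono ball_subset_closedBall).comp hφd hφm)
      (((mapsTo_mSigma_ball hc).comp hφm).mono_right ball_subset_closedBall)
      (mSigma_self _) (mem_ball_zero_iff.mp ha)
  calc 1 - ‖a‖ ^ 2 ≤ 1 - ‖mSigma (φ 0) (φ a)‖ ^ 2 := by gcongr
    _ ≤ (1 + ‖φ 0‖) / (1 - ‖φ 0‖) * (1 - ‖φ a‖ ^ 2) := by
      simpa only [mSigma_mSigma hc hφa] using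
        one_sub_norm_sq_le_of_mSigma hc (norm_mSigma_le_one hc hφa)

section CircleAverage

variable {R : ℝ}

lemma circleAverage_norm_sq_const_add {H : ℂ → ℂ} (hH : DiffContOnCl ℂ H (ball 0 |R|))
    (h0 : H 0 = 0) (c : ℂ) :
    circleAverage (fun z => ‖c + H z‖ ^ 2) 0 R =
      ‖c‖ ^ 2 + circleAverage (fun z => ‖H z‖ ^ 2) 0 R := by
  have hHs : ContinuousOn H (sphere 0 |R|) := hH.continuousOn_ball.mono sphere_subset_closedBall
  have hcross : circleAverage (fun z => (2 * conj c * H z).re) 0 R = 0 := by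
    refine (Complex.reCLM.circleAverage_comp_comm (f := fun z => 2 * conj c * H z)
      (by fun_prop : ContinuousOn _ _).circleIntegrable').trans ?_
    simp_rw [← smul_eq_mul (2 * conj c)]
    rw [circleAverage_fun_smul, hH.circleAverage, h0, smul_zero, Complex.reCLM_apply,
      Complex.zero_re]
  have hexpand : ∀ z, ‖c + H z‖ ^ 2 = ‖c‖ ^ 2 + ((2 * conj c * H z).re + ‖H z‖ ^ 2) := fun z => by
    simp only [Complex.sq_norm, Complex.normSq_add, Complex.mul_re, Complex.mul_im,
      Complex.conj_re, Complex.conj_im, Complex.re_ofNat, Complex.im_ofNat]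
    ring
  simp_rw [hexpand]
  rw [circleAverage_fun_add (circleIntegrable_const _ _ _)
      (by fun_prop : ContinuousOn _ _).circleIntegrable', circleAverage_const,
    circleAverage_fun_add (by fun_prop : ContinuousOn _ _).circleIntegrable'
      (by fun_prop : ContinuousOn _ _).circleIntegrable', hcross, zero_add]

lemma circleAverage_norm_sq_sum_comp_le {ψ : ℂ → ℂ} (hψ : DiffContOnCl ℂ ψ (ball 0 |R|))
    (h0 : ψ 0 = 0) (hle : ∀ z ∈ sphere (0 : ℂ) |R|, ‖ψ z‖ ≤ |R|) (N : ℕ) (c : ℕ → ℂ) :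
    circleAverage (fun z => ‖∑ n ∈ range N, c n * ψ z ^ n‖ ^ 2) 0 R ≤
      circleAverage (fun z => ‖∑ n ∈ range N, c n * z ^ n‖ ^ 2) 0 R := by
  induction N generalizing c with
  | zero => simp
  | succ N ih =>
    set Q : ℂ → ℂ := fun w => ∑ n ∈ range N, c (n + 1) * w ^ n
    have hwQ : Differentiable ℂ (fun w => w * Q w) := by fun_prop
    have hsplit : ∀ w, ∑ n ∈ range (N + 1), c n * w ^ n = c 0 + w * Q w := fun w => by
      rw [sum_range_succ', mul_sum, add_comm]
      simp only [pow_zero, mul_one, pow_succ', mul_left_comm w]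
    have hQc : Continuous Q := by fun_prop
    have hψs : ContinuousOn ψ (sphere 0 |R|) := hψ.continuousOn_ball.mono sphere_subset_closedBall
    have hQψ : ContinuousOn (fun z => ‖Q (ψ z)‖ ^ 2) (sphere 0 |R|) :=
      ((hQc.comp_continuousOn hψs).norm).pow 2
    simp_rw [hsplit]
    rw [circleAverage_norm_sq_const_add (H := fun z => ψ z * Q (ψ z))
        (hwQ.comp_diffContOnCl hψ) (by simp [h0]),
      circleAverage_norm_sq_const_add (H := fun z => z * Q z) hwQ.diffContOnCl (by simp)]
    gcongr ‖c 0‖ ^ 2 + ?_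
    calc circleAverage (fun z => ‖ψ z * Q (ψ z)‖ ^ 2) 0 R
        ≤ circleAverage (fun z => |R| ^ 2 • ‖Q (ψ z)‖ ^ 2) 0 R := by
          refine circleAverage_mono
            ((hψs.mul (hQc.comp_continuousOn hψs)).norm.pow 2).circleIntegrable'
            (hQψ.const_smul (|R| ^ 2)).circleIntegrable' fun z hz => ?_
          rw [norm_mul, mul_pow, smul_eq_mul]
          gcongr
          exact hle z hz
      _ = |R| ^ 2 • circleAverage (fun z => ‖Q (ψ z)‖ ^ 2) 0 R := circleAverage_fun_smul
      _ ≤ |R| ^ 2 • circleAverage (fun z => ‖Q z‖ ^ 2) 0 R :=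
          smul_le_smul_of_nonneg_left (ih _) (sq_nonneg _)
      _ = circleAverage (fun z => ‖z * Q z‖ ^ 2) 0 R := by
          rw [← circleAverage_fun_smul]
          refine circleAverage_congr_sphere fun z hz => ?_
          rw [norm_mul, mul_pow, mem_sphere_zero_iff_norm.mp hz, smul_eq_mul]

lemma tendsto_circleAverage_norm_sq {G : ℕ → ℂ → ℂ} {g : ℂ → ℂ}
    (hG : ∀ n, ContinuousOn (G n) (sphere 0 |R|))
    (hlim : TendstoUniformlyOn G g atTop (sphere 0 |R|)) :
    Tendsto (fun n => circleAverage (fun z => ‖G n z‖ ^ 2) 0 R) atTop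
      (𝓝 (circleAverage (fun z => ‖g z‖ ^ 2) 0 R)) := by
  obtain ⟨C, hC⟩ := (isCompact_sphere (0 : ℂ) |R|).exists_bound_of_continuousOn
    (hlim.continuousOn (Frequently.of_forall hG))
  have hbound : ∀ᶠ n in atTop, ∀ z ∈ sphere (0 : ℂ) |R|, ‖G n z‖ ≤ C + 1 :=
    (Metric.tendstoUniformlyOn_iff.mp hlim 1 one_pos).mono fun n hn z hz => by
      have := norm_le_norm_add_norm_sub' (G n z) (g z)
      rw [norm_sub_rev, ← dist_eq_norm] at this
      linarith [hn z hz, hC z hz]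
  simp only [circleAverage_def]
  refine (intervalIntegral.tendsto_integral_filter_of_dominated_convergence
    (fun _ => (C + 1) ^ 2) (Eventually.of_forall fun n => ?_)
    (hbound.mono fun n hn => ae_of_all _ fun θ _ => ?_) intervalIntegrable_const
    (ae_of_all _ fun θ _ => ?_)).const_smul _
  · exact (((hG n).comp_continuous (continuous_circleMap 0 R)
      (circleMap_mem_sphere' 0 R)).norm.pow 2).aestronglyMeasurable
  · rw [norm_pow, norm_norm]
    exact pow_le_pow_left₀ (norm_nonneg _) (hn _ (circleMap_mem_sphere' 0 R θ)) 2
  · exact ((hlim.tendsto_at (circleMap_mem_sphere' 0 R θ)).norm.pow 2)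

lemma circleAverage_norm_sq_comp_le_of_lt_one {F ψ : ℂ → ℂ} (hF : DiffContOnCl ℂ F (ball 0 1))
    (hψ : DifferentiableOn ℂ ψ (ball 0 1)) (hψm : MapsTo ψ (ball 0 1) (closedBall 0 1))
    (h0 : ψ 0 = 0) {r : ℝ} (hr0 : 0 ≤ r) (hr1 : r < 1) :
    circleAverage (fun z => ‖F (ψ z)‖ ^ 2) 0 r ≤ circleAverage (fun z => ‖F z‖ ^ 2) 0 r := by
  obtain ⟨p, hps⟩ : ∃ p, HasFPowerSeriesOnBall F p 0 1 :=
    ⟨_, DiffContOnCl.hasFPowerSeriesOnBall (R := 1) (by simpa using hF) one_pos⟩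
  let ρ : NNReal := ⟨(1 + r) / 2, by positivity⟩
  have hρ : (ρ : ℝ) = (1 + r) / 2 := rfl
  have hunif : TendstoUniformlyOn (fun N w => ∑ n ∈ range N, p.coeff n * w ^ n) F atTop
      (ball 0 ρ) := by
    refine ((hps.tendstoUniformlyOn (r' := ρ) ?_).congr_right fun w _ => by simp).congr
      (Eventually.of_forall fun N w _ => sum_congr rfl fun n _ => ?_)
    · rw [ENNReal.coe_lt_one_iff, ← NNReal.coe_lt_one, hρ]
      linarith
    · rw [p.apply_eq_pow_smul_coeff, smul_eq_mul, mul_comm]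
  have hr : |r| < 1 := by rwa [abs_of_nonneg hr0]
  have hschwarz : ∀ z ∈ sphere (0 : ℂ) |r|, ‖ψ z‖ ≤ |r| := fun z hz => by
    rw [mem_sphere_zero_iff_norm] at hz
    exact hz ▸ Complex.norm_le_norm_of_mapsTo_ball hψ hψm h0 (hz ▸ hr)
  have hball : ∀ w : ℂ, ‖w‖ ≤ |r| → w ∈ ball (0 : ℂ) ρ := fun w hw => by
    rw [mem_ball_zero_iff, hρ]
    rw [abs_of_nonneg hr0] at hw
    linarith
  have hψs : ContinuousOn ψ (sphere 0 |r|) := hψ.continuousOn.mono (sphere_subset_ball hr)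
  refine le_of_tendsto_of_tendsto'
    (tendsto_circleAverage_norm_sq (fun N => ?_)
      ((hunif.comp ψ).mono fun z hz => hball _ (hschwarz z hz)))
    (tendsto_circleAverage_norm_sq (fun N => ?_)
      (hunif.mono fun z hz => hball _ (mem_sphere_zero_iff_norm.mp hz).le))
    fun N => circleAverage_norm_sq_sum_comp_le ?_ h0 hschwarz N p.coeff
  · exact (by fun_prop : Continuous fun w => ∑ n ∈ range N, p.coeff n * w ^ n).comp_continuousOn
      hψs
  · fun_prop
  · exact hψ.diffContOnCl_ball (closedBall_subset_ball hr)

lemma circleAverage_norm_sq_comp_le {F ψ : ℂ → ℂ} (hF : DiffContOnCl ℂ F (ball 0 1))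
    (hψ : DiffContOnCl ℂ ψ (ball 0 1)) (hψm : MapsTo ψ (closedBall 0 1) (closedBall 0 1))
    (h0 : ψ 0 = 0) :
    circleAverage (fun z => ‖F (ψ z)‖ ^ 2) 0 1 ≤ circleAverage (fun z => ‖F z‖ ^ 2) 0 1 := by
  have hcont : ∀ G : ℂ → ℂ, ContinuousOn G (closedBall 0 1) →
      ContinuousWithinAt (circleAverage (fun z => ‖G z‖ ^ 2) 0) (Ico 0 1) 1 := fun G hG =>
    have hG' : ContinuousOn (circleAverage (fun z => ‖G z‖ ^ 2) 0) (Icc 0 1) :=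
      ContinuousOn.circleAverage ((hG.norm.pow 2).mono fun z hz => by simpa using hz.2)
        fun _ hr => hr.1
    (hG' 1 ⟨zero_le_one, le_rfl⟩).mono Ico_subset_Icc_self
  exact ContinuousWithinAt.closure_le (by simp [closure_Ico])
    (hcont _ (hF.continuousOn_ball.comp hψ.continuousOn_ball hψm))
    (hcont _ hF.continuousOn_ball) fun r hr =>
      circleAverage_norm_sq_comp_le_of_lt_one hF hψ.differentiableOn
        (hψm.mono_left ball_subset_closedBall) h0 hr.1 hr.2

end CircleAverage

lemma bnormSq_eq_circleAverage (G : ℂ → ℂ) :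
    bnormSq G = 2 * π * circleAverage (fun z => ‖G z‖ ^ 2) 0 1 := by
  rw [circleAverage_def, bnormSq, smul_eq_mul, ← mul_assoc, mul_inv_cancel₀ (by positivity),
    one_mul]
  simp [circleMap_zero]

lemma bnormSq_comp_mSigma_sub_le {φ f : ℂ → ℂ} (hφ : DiffContOnCl ℂ φ (ball 0 1))
    (hφm : MapsTo φ (ball 0 1) (ball 0 1))
    (hφmc : MapsTo φ (closedBall 0 1) (closedBall 0 1)) (hf : DiffContOnCl ℂ f (ball 0 1))
    {a : ℂ} (ha : a ∈ ball (0 : ℂ) 1) :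
    bnormSq (fun ξ => f (φ (mSigma a ξ)) - f (φ a)) ≤
      bnormSq (fun ξ => f (mSigma (φ a) ξ) - f (φ a)) := by
  have ha1 : ‖a‖ < 1 := mem_ball_zero_iff.mp ha
  have hb1 : ‖φ a‖ < 1 := mem_ball_zero_iff.mp (hφm ha)
  have hσ : ∀ {c : ℂ}, ‖c‖ < 1 → DiffContOnCl ℂ (mSigma c) (ball 0 1) := fun hc =>
    .mk_ball ((differentiableOn_mSigma hc).mono ball_subset_closedBall)
      (differentiableOn_mSigma hc).continuousOn
  set ψ := mSigma (φ a) ∘ φ ∘ mSigma a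
  have hψ : DiffContOnCl ℂ ψ (ball 0 1) :=
    (hσ hb1).comp (hφ.comp (hσ ha1) (mapsTo_mSigma_ball ha1)) (hφm.comp (mapsTo_mSigma_ball ha1))
  have hψm : MapsTo ψ (closedBall 0 1) (closedBall 0 1) :=
    (mapsTo_mSigma_closedBall hb1).comp (hφmc.comp (mapsTo_mSigma_closedBall ha1))
  have hF : DiffContOnCl ℂ (fun w => f (mSigma (φ a) w) - f (φ a)) (ball 0 1) :=
    (hf.comp (hσ hb1) (mapsTo_mSigma_ball hb1)).sub_const _
  rw [bnormSq_eq_circleAverage, bnormSq_eq_circleAverage]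
  refine mul_le_mul_of_nonneg_left ?_ (by positivity)
  calc circleAverage (fun z => ‖f (φ (mSigma a z)) - f (φ a)‖ ^ 2) 0 1
      = circleAverage (fun z => ‖f (mSigma (φ a) (ψ z)) - f (φ a)‖ ^ 2) 0 1 := by
        refine circleAverage_congr_sphere fun z hz => ?_
        have hz1 : ‖z‖ ≤ 1 := (by simpa using hz : ‖z‖ = 1).le
        simp only [ψ, Function.comp_apply,
          mSigma_mSigma hb1 (mem_closedBall_zero_iff.mp (hφmc (mapsTo_mSigma_closedBall ha1
            (mem_closedBall_zero_iff.mpr hz1))))]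
    _ ≤ _ := circleAverage_norm_sq_comp_le hF hψ hψm (by simp [ψ])

/-- If `p ∈ [0,1]` and `φ` is any analytic self-map of the disk, then
`‖f∘φ‖_{CA_p,*} ≤ ((1+|φ(0)|)/(1-|φ(0)|))^{(1-p)/2} ‖f‖_{CA_p,*}`; in particular every
composition operator is bounded on `CA_p` for `0 ≤ p ≤ 1`. -/
theorem composition_bounded_on_CAp (p : ℝ) (hp : p ∈ Set.Icc (0:ℝ) 1)
    (φ f : ℂ → ℂ) (M : ℝ)
    (hφd : DifferentiableOn ℂ φ (Metric.ball (0:ℂ) 1))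
    (hφm : Set.MapsTo φ (Metric.ball (0:ℂ) 1) (Metric.ball (0:ℂ) 1))
    (hφc : ContinuousOn φ (Metric.closedBall (0:ℂ) 1))
    (hφmc : Set.MapsTo φ (Metric.closedBall (0:ℂ) 1) (Metric.closedBall (0:ℂ) 1))
    (hfd : DifferentiableOn ℂ f (Metric.ball (0:ℂ) 1))
    (hfc : ContinuousOn f (Metric.closedBall (0:ℂ) 1))
    (hfM : ∀ a ∈ Metric.ball (0:ℂ) 1,
      (1 - ‖a‖ ^ 2) ^ ((1 - p) / 2) *
        Real.sqrt (bnormSq fun ξ => f (mSigma a ξ) - f a) ≤ M) :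
    ∀ a ∈ Metric.ball (0:ℂ) 1,
      (1 - ‖a‖ ^ 2) ^ ((1 - p) / 2) *
        Real.sqrt (bnormSq fun ξ => f (φ (mSigma a ξ)) - f (φ a)) ≤
      ((1 + ‖φ 0‖) / (1 - ‖φ 0‖)) ^ ((1 - p) / 2) * M := by
  intro a ha
  have he : 0 ≤ (1 - p) / 2 := by linarith [hp.2]
  have hK : 0 ≤ (1 + ‖φ 0‖) / (1 - ‖φ 0‖) := by
    have := mem_ball_zero_iff.mp (hφm (mem_ball_self one_pos))
    exact div_nonneg (by positivity) (by linarith)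
  have hb : 0 ≤ 1 - ‖φ a‖ ^ 2 := by nlinarith [mem_ball_zero_iff.mp (hφm ha), norm_nonneg (φ a)]
  have ha' : 0 ≤ 1 - ‖a‖ ^ 2 := by nlinarith [mem_ball_zero_iff.mp ha, norm_nonneg a]
  calc (1 - ‖a‖ ^ 2) ^ ((1 - p) / 2) * √(bnormSq fun ξ => f (φ (mSigma a ξ)) - f (φ a))
      ≤ ((1 + ‖φ 0‖) / (1 - ‖φ 0‖) * (1 - ‖φ a‖ ^ 2)) ^ ((1 - p) / 2) *
          √(bnormSq fun ξ => f (mSigma (φ a) ξ) - f (φ a)) := by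
        gcongr
        · exact one_sub_norm_sq_le_of_mapsTo_ball hφd hφm ha
        · exact bnormSq_comp_mSigma_sub_le (.mk_ball hφd hφc) hφm hφmc (.mk_ball hfd hfc) ha
    _ = ((1 + ‖φ 0‖) / (1 - ‖φ 0‖)) ^ ((1 - p) / 2) * ((1 - ‖φ a‖ ^ 2) ^ ((1 - p) / 2) *
          √(bnormSq fun ξ => f (mSigma (φ a) ξ) - f (φ a))) := by
        rw [Real.mul_rpow hK hb, mul_assoc]
    _ ≤ ((1 + ‖φ 0‖) / (1 - ‖φ 0‖)) ^ ((1 - p) / 2) * M := by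
        gcongr
        exact hfM _ (hφm ha)
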